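/- arXiv:1607.04472 — 3 statements merged into one kernel-verified Lean document; each statement's English description precedes it below -/
import Mathlib

section
/- Let (𝒟, π) be a closed representation of a unital *-algebra A on a complex Hilbert space H. Then the set A' of all bounded operators x ∈ B(H) such that x(𝒟) ⊆ 𝒟, x*(𝒟) ⊆ 𝒟, x(π(a)ξ) = π(a)(xξ) and x*(π(a)ξ) = π(a)(x*ξ) for all a ∈ A and ξ ∈ 𝒟 (the adjointable *-intertwiners of π) is a unital C*-subalgebra of B(H): it contains the identity, is a subalgebra, is closed under taking adjoints, and is closed in the operator norm. -/
/-- A representation of a unital `⋆`-algebra `A` on a complex Hilbert space `H`: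
a dense subspace `dom ⊆ H` together with a unital algebra homomorphism `π` from `A` into the
endomorphisms of `dom` satisfying `⟪π a ξ, η⟫ = ⟪ξ, π (star a) η⟫`. -/
structure HilbertRep (A : Type*) [Ring A] [Algebra ℂ A] [StarRing A] [StarModule ℂ A]
    (H : Type*) [NormedAddCommGroup H] [InnerProductSpace ℂ H] where
  dom : Submodule ℂ H
  dense : Dense (dom : Set H)
  π : A → (dom →ₗ[ℂ] dom)
  π_one : π 1 = LinearMap.id
  π_mul : ∀ a b : A, π (a * b) = (π a).comp (π b)
  π_add : ∀ a b : A, π (a + b) = π a + π b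
  π_smul : ∀ (c : ℂ) (a : A), π (c • a) = c • π a
  π_star : ∀ (a : A) (ξ η : dom),
    (inner ℂ ((π a ξ : dom) : H) (η : H) : ℂ) = inner ℂ (ξ : H) ((π (star a) η : dom) : H)

variable {A : Type*} [Ring A] [Algebra ℂ A] [StarRing A] [StarModule ℂ A]
variable {H : Type*} [NormedAddCommGroup H] [InnerProductSpace ℂ H] [CompleteSpace H]

/-- The operator `π a` of a representation, as a partially defined (unbounded) linear
operator on `H`. -/
def HilbertRep.op (ρ : HilbertRep A H) (a : A) : H →ₗ.[ℂ] H :=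
  ⟨ρ.dom, ρ.dom.subtype.comp (ρ.π a)⟩

/-- A representation is *closed* if its domain is the intersection of the domains of the
closures of all the operators `π a`. -/
def HilbertRep.IsClosedRep (ρ : HilbertRep A H) : Prop :=
  (ρ.dom : Set H) = ⋂ a : A, ((ρ.op a).closure.domain : Set H)

/-- A bounded operator `x` is an (adjointable) `⋆`-intertwiner of the representation `(𝒟, π)`
if both `x` and `x*` preserve `𝒟` and commute with every `π a` on `𝒟`. -/
def IsStarIntertwiner (ρ : HilbertRep A H) (x : H →L[ℂ] H) : Prop :=
  ∀ ξ : ρ.dom, ∃ η ζ : ρ.dom,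
    (η : H) = x (ξ : H) ∧ (ζ : H) = ContinuousLinearMap.adjoint x (ξ : H) ∧
    ∀ a : A, ((ρ.π a η : ρ.dom) : H) = x ((ρ.π a ξ : ρ.dom) : H) ∧
      ((ρ.π a ζ : ρ.dom) : H) = ContinuousLinearMap.adjoint x ((ρ.π a ξ : ρ.dom) : H)

/-!
The ⋆-intertwiners are the operators `x` with both `x` and `x*` in the algebra `T` of bounded
operators that preserve `𝒟` and commute with `π` there, so they form the ⋆-subalgebra `T ∩ star T`.
It is norm closed as soon as `T` is. Each `π a` is closable, being extended by the closed operator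
`π (star a)†`. Since the representation is closed, a vector in the domain of every `cl (π a)` lies
in `𝒟`, so `x ∈ T` amounts to `(x ξ, x (π a ξ)) ∈ graph (cl (π a))` for all `ξ ∈ 𝒟` and `a`:
a family of closed conditions on `x`.
-/

open LinearPMap

/-- The largest `⋆`-subalgebra contained in `S`. -/
def Subalgebra.starInterior {R B : Type*} [CommSemiring R] [StarRing R] [Semiring B] [StarRing B]
    [Algebra R B] [StarModule R B] (S : Subalgebra R B) : StarSubalgebra R B where
  toSubalgebra := S ⊓ star S
  star_mem' := fun ⟨hx, hx'⟩ => ⟨hx', (Subalgebra.mem_star_iff _ _).mpr (by rwa [star_star])⟩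

theorem Subalgebra.isClosed_starInterior {R B : Type*} [CommSemiring R] [StarRing R] [Semiring B]
    [StarRing B] [Algebra R B] [StarModule R B] [TopologicalSpace B] [ContinuousStar B]
    {S : Subalgebra R B} (hS : IsClosed (S : Set B)) : IsClosed (S.starInterior : Set B) :=
  hS.inter (hS.preimage continuous_star)

namespace HilbertRep

section Intertwiners

variable {H : Type*} [NormedAddCommGroup H] [InnerProductSpace ℂ H] (ρ : HilbertRep A H)

def intertwiners : Subalgebra ℂ (H →L[ℂ] H) where
  carrier := {x | ∀ ξ : ρ.dom, ∃ η : ρ.dom,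
    (η : H) = x ξ ∧ ∀ a : A, ((ρ.π a η : ρ.dom) : H) = x (ρ.π a ξ)}
  mul_mem' {x y} hx hy ξ := by
    obtain ⟨η, hη, hηπ⟩ := hy ξ
    obtain ⟨θ, hθ, hθπ⟩ := hx η
    exact ⟨θ, by rw [hθ, hη]; rfl, fun a => by rw [hθπ, hηπ]; rfl⟩
  add_mem' {x y} hx hy ξ := by
    obtain ⟨η, hη, hηπ⟩ := hx ξ
    obtain ⟨θ, hθ, hθπ⟩ := hy ξ
    exact ⟨η + θ, by simp [hη, hθ], fun a => by simp [hηπ, hθπ]⟩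
  algebraMap_mem' c ξ :=
    ⟨c • ξ, by simp [Algebra.algebraMap_eq_smul_one], fun a => by
      simp [Algebra.algebraMap_eq_smul_one]⟩

variable {ρ}

theorem IsClosedRep.exists_eq_of_forall_mem_closure_graph (hρ : ρ.IsClosedRep) {y : H}
    {z : A → H} (h : ∀ a, (y, z a) ∈ (ρ.op a).closure.graph) :
    ∃ η : ρ.dom, (η : H) = y ∧ ∀ a, ((ρ.π a η : ρ.dom) : H) = z a := by
  have hy : y ∈ (ρ.dom : Set H) := by
    rw [hρ]
    exact Set.mem_iInter.mpr fun a => mem_domain_of_mem_graph (h a)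
  refine ⟨⟨y, hy⟩, rfl, fun a => ?_⟩
  exact (ρ.op a).closure.mem_graph_snd_inj'
    (le_graph_of_le (ρ.op a).le_closure ((ρ.op a).mem_graph ⟨y, hy⟩)) (h a) rfl

theorem IsClosedRep.mem_intertwiners_iff (hρ : ρ.IsClosedRep) {x : H →L[ℂ] H} :
    x ∈ ρ.intertwiners ↔
      ∀ (ξ : ρ.dom) (a : A), (x ξ, x (ρ.π a ξ)) ∈ (ρ.op a).closure.graph := by
  refine ⟨fun hx ξ a => ?_, fun h ξ => hρ.exists_eq_of_forall_mem_closure_graph (h ξ)⟩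
  obtain ⟨η, hη, hηπ⟩ := hx ξ
  rw [← hη, ← hηπ a]
  exact le_graph_of_le (ρ.op a).le_closure ((ρ.op a).mem_graph η)

end Intertwiners

theorem op_isClosable (ρ : HilbertRep A H) (a : A) : (ρ.op a).IsClosable :=
  have hformal : (ρ.op a).IsFormalAdjoint (ρ.op (star a)) := ρ.π_star a
  (adjoint_isClosed (T := ρ.op (star a)) ρ.dense).isClosable.leIsClosable
    (hformal.symm.le_adjoint ρ.dense)

variable {ρ : HilbertRep A H}

theorem IsClosedRep.isClosed_intertwiners (hρ : ρ.IsClosedRep) :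
    IsClosed (ρ.intertwiners : Set (H →L[ℂ] H)) := by
  have hsets : (ρ.intertwiners : Set (H →L[ℂ] H)) =
      ⋂ (ξ : ρ.dom) (a : A),
        (fun x : H →L[ℂ] H => (x ξ, x (ρ.π a ξ))) ⁻¹' (ρ.op a).closure.graph := by
    ext x
    simp only [SetLike.mem_coe, hρ.mem_intertwiners_iff, Set.mem_iInter, Set.mem_preimage]
  rw [hsets]
  exact isClosed_iInter fun ξ => isClosed_iInter fun a =>
    (ρ.op_isClosable a).closure_isClosed.preimage
      ((continuous_eval_const _).prodMk (continuous_eval_const _))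

theorem isStarIntertwiner_iff_mem_starInterior {x : H →L[ℂ] H} :
    IsStarIntertwiner ρ x ↔ x ∈ ρ.intertwiners.starInterior := by
  refine ⟨fun hx => ⟨fun ξ => ?_, fun ξ => ?_⟩, fun ⟨hx, hx'⟩ ξ => ?_⟩
  · obtain ⟨η, _, hη, -, hπ⟩ := hx ξ
    exact ⟨η, hη, fun a => (hπ a).1⟩
  · obtain ⟨_, ζ, -, hζ, hπ⟩ := hx ξ
    exact ⟨ζ, hζ, fun a => (hπ a).2⟩
  · obtain ⟨η, hη, hηπ⟩ := hx ξ
    obtain ⟨ζ, hζ, hζπ⟩ := hx' ξ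
    exact ⟨η, ζ, hη, hζ, fun a => ⟨hηπ a, hζπ a⟩⟩

end HilbertRep

/-- For a closed representation `(𝒟, π)` of a unital `⋆`-algebra on a Hilbert space, the set of
adjointable `⋆`-intertwiners is a unital C*-subalgebra of `B(H)`: it is a `⋆`-closed unital
subalgebra which is closed in the operator norm. -/
theorem starIntertwiners_cstar_subalgebra (ρ : HilbertRep A H) (hρ : ρ.IsClosedRep) :
    ∃ S : StarSubalgebra ℂ (H →L[ℂ] H),
      (S : Set (H →L[ℂ] H)) = {x | IsStarIntertwiner ρ x} ∧
      IsClosed (S : Set (H →L[ℂ] H)) := by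
  refine ⟨ρ.intertwiners.starInterior, ?_, ?_⟩
  · ext x
    exact HilbertRep.isStarIntertwiner_iff_mem_starInterior.symm
  · exact Subalgebra.isClosed_starInterior hρ.isClosed_intertwiners
end

section
/- Let G be a group, A = ⊕_{g∈G} A_g a G-graded unital *-algebra over ℂ whose unit fibre A_e is commutative, and χ a positive character of A_e. Fix g ∈ G and b ∈ A_g with χ(b* b) ≠ 0. Then the map ϑ : A_e → ℂ defined by ϑ(x) := χ(b* x b)/χ(b* b) is again a positive character of A_e: it is ℂ-linear, unital, multiplicative, satisfies ϑ(x*) = conj(ϑ(x)), and ϑ(c* c) is real and nonnegative for every h ∈ G and c ∈ A_h. Moreover ϑ does not depend on the choice of b: if b' ∈ A_g also satisfies χ(b'* b') ≠ 0, then χ(b* x b)/χ(b* b) = χ(b'* x b')/χ(b'* b') for all x ∈ A_e. -/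
/-!
Write `φ(u, v) = χ(u* v)` and `ψ(u, v) = χ(u* x v)` for `u, v ∈ A_g` and a fixed `x ∈ A_e`.
For `u, v, w, z ∈ A_g` the element `v w*` lies in the commutative fibre `A_e`, so it commutes
with `x`, and multiplicativity of `χ` on `A_e` gives `ψ(u, v) φ(w, z) = φ(u, v) ψ(w, z)`.
Taking `u = v = b`, `w = z = b'` yields independence of `b`; taking `u = v = w = b`, `z = y b`
yields multiplicativity of `ϑ`. Positivity holds because `b* c* c b = (c b)* (c b)`.
-/

open ComplexOrder

/-- A `G`-graded unital `⋆`-algebra over `ℂ`: a direct sum decomposition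
`A = ⊕_{g ∈ G} A_g` into subspaces with `A_g · A_h ⊆ A_{gh}`, `(A_g)* = A_{g⁻¹}` and
`1 ∈ A_e`. -/
structure GradedStarAlgebra (G : Type*) [Group G]
    (A : Type*) [Ring A] [Algebra ℂ A] [StarRing A] [StarModule ℂ A] where
  fiber : G → Submodule ℂ A
  mul_mem' : ∀ {g h : G} {a b : A}, a ∈ fiber g → b ∈ fiber h → a * b ∈ fiber (g * h)
  star_mem' : ∀ {g : G} {a : A}, a ∈ fiber g → star a ∈ fiber g⁻¹
  one_mem' : (1 : A) ∈ fiber 1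
  decompose' : ∀ a : A, ∃ (F : Finset G) (c : G → A),
    (∀ g : G, c g ∈ fiber g) ∧ a = ∑ g ∈ F, c g
  independent' : ∀ (F : Finset G) (c : G → A), (∀ g : G, c g ∈ fiber g) →
    ∑ g ∈ F, c g = 0 → ∀ g ∈ F, c g = 0

variable {G : Type*} [Group G]
variable {A : Type*} [Ring A] [Algebra ℂ A] [StarRing A] [StarModule ℂ A]

/-- A positive character of the unit fibre `A_e` of a `G`-graded unital `⋆`-algebra: a unital,
multiplicative, `ℂ`-linear, `⋆`-preserving functional on `A_e` such that `χ (a* a) ≥ 0` for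
every `a ∈ A_g` and every `g ∈ G`. -/
structure PosChar (S : GradedStarAlgebra G A) where
  toFun : A → ℂ
  map_one' : toFun 1 = 1
  map_mul' : ∀ x ∈ S.fiber 1, ∀ y ∈ S.fiber 1, toFun (x * y) = toFun x * toFun y
  map_add' : ∀ x ∈ S.fiber 1, ∀ y ∈ S.fiber 1, toFun (x + y) = toFun x + toFun y
  map_smul' : ∀ (c : ℂ), ∀ x ∈ S.fiber 1, toFun (c • x) = c * toFun x
  map_star' : ∀ x ∈ S.fiber 1, toFun (star x) = starRingEnd ℂ (toFun x)
  pos' : ∀ (g : G), ∀ a ∈ S.fiber g,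
    0 ≤ (toFun (star a * a)).re ∧ (toFun (star a * a)).im = 0

namespace GradedStarAlgebra

variable {S : GradedStarAlgebra G A} {g : G} {u v x : A}

lemma mul_mem_of_mem_one_left (hx : x ∈ S.fiber 1) (hv : v ∈ S.fiber g) :
    x * v ∈ S.fiber g := by
  simpa using S.mul_mem' hx hv

lemma star_mul_mem_one (hu : u ∈ S.fiber g) (hv : v ∈ S.fiber g) :
    star u * v ∈ S.fiber 1 := by
  simpa using S.mul_mem' (S.star_mem' hu) hv

lemma mul_star_mem_one (hu : u ∈ S.fiber g) (hv : v ∈ S.fiber g) :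
    u * star v ∈ S.fiber 1 := by
  simpa using S.mul_mem' hu (S.star_mem' hv)

lemma star_mul_mul_mem_one (hu : u ∈ S.fiber g) (hx : x ∈ S.fiber 1) (hv : v ∈ S.fiber g) :
    star u * x * v ∈ S.fiber 1 := by
  rw [mul_assoc]
  exact star_mul_mem_one hu (mul_mem_of_mem_one_left hx hv)

end GradedStarAlgebra

namespace PosChar

open GradedStarAlgebra

variable {S : GradedStarAlgebra G A} {g : G}

lemma nonneg_star_mul_self (χ : PosChar S) {a : A} (ha : a ∈ S.fiber g) :
    0 ≤ χ.toFun (star a * a) :=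
  Complex.nonneg_iff.mpr ⟨(χ.pos' g a ha).1, (χ.pos' g a ha).2.symm⟩

lemma map_star_mul_self_eq_conj (χ : PosChar S) {a : A} (ha : a ∈ S.fiber g) :
    χ.toFun (star a * a) = starRingEnd ℂ (χ.toFun (star a * a)) := by
  simpa using χ.map_star' _ (star_mul_mem_one ha ha)

lemma map_sandwich_mul_map_star_mul (hcomm : ∀ x ∈ S.fiber 1, ∀ y ∈ S.fiber 1, x * y = y * x)
    (χ : PosChar S) {x u v w z : A} (hx : x ∈ S.fiber 1) (hu : u ∈ S.fiber g)
    (hv : v ∈ S.fiber g) (hw : w ∈ S.fiber g) (hz : z ∈ S.fiber g) :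
    χ.toFun (star u * x * v) * χ.toFun (star w * z) =
      χ.toFun (star u * v) * χ.toFun (star w * x * z) := by
  have hswap : (star u * x * v) * (star w * z) = (star u * v) * (star w * x * z) := by
    calc (star u * x * v) * (star w * z) = star u * (x * (v * star w)) * z := by noncomm_ring
      _ = star u * ((v * star w) * x) * z := by rw [hcomm x hx _ (mul_star_mem_one hv hw)]
      _ = (star u * v) * (star w * x * z) := by noncomm_ring
  rw [← χ.map_mul' _ (star_mul_mul_mem_one hu hx hv) _ (star_mul_mem_one hw hz),
    ← χ.map_mul' _ (star_mul_mem_one hu hv) _ (star_mul_mul_mem_one hw hx hz), hswap]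

noncomputable def conjugate (hcomm : ∀ x ∈ S.fiber 1, ∀ y ∈ S.fiber 1, x * y = y * x)
    (χ : PosChar S) {b : A} (hb : b ∈ S.fiber g) (hb0 : χ.toFun (star b * b) ≠ 0) :
    PosChar S where
  toFun x := χ.toFun (star b * x * b) / χ.toFun (star b * b)
  map_one' := by rw [mul_one, div_self hb0]
  map_mul' x hx y hy := by
    have hyb := mul_mem_of_mem_one_left hy hb
    have key := χ.map_sandwich_mul_map_star_mul hcomm hx hb hb hb hyb
    rw [← mul_assoc, ← mul_assoc, mul_assoc _ x y] at key
    rw [div_mul_div_comm, div_eq_div_iff hb0 (mul_ne_zero hb0 hb0)]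
    linear_combination -χ.toFun (star b * b) * key
  map_add' x hx y hy := by
    rw [mul_add, add_mul, χ.map_add' _ (star_mul_mul_mem_one hb hx hb) _
      (star_mul_mul_mem_one hb hy hb), add_div]
  map_smul' c x hx := by
    rw [mul_smul_comm, smul_mul_assoc, χ.map_smul' c _ (star_mul_mul_mem_one hb hx hb),
      mul_div_assoc]
  map_star' x hx := by
    have hstar : star b * star x * b = star (star b * x * b) := by simp [mul_assoc]
    rw [hstar, χ.map_star' _ (star_mul_mul_mem_one hb hx hb), map_div₀,
      ← χ.map_star_mul_self_eq_conj hb]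
  pos' h c hc := by
    have hcb : star b * (star c * c) * b = star (c * b) * (c * b) := by simp [mul_assoc]
    rw [hcb]
    have hnonneg := div_nonneg (χ.nonneg_star_mul_self (S.mul_mem' hc hb))
      (χ.nonneg_star_mul_self hb)
    exact ⟨(Complex.nonneg_iff.mp hnonneg).1, (Complex.nonneg_iff.mp hnonneg).2.symm⟩

end PosChar

/-- Let `A` be a `G`-graded unital `⋆`-algebra with commutative unit fibre `A_e`, `χ` a positive
character of `A_e`, and `b ∈ A_g` with `χ (b* b) ≠ 0`.  Then `x ↦ χ(b* x b)/χ(b* b)` is again a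
positive character of `A_e`, and it does not depend on the choice of `b`. -/
theorem posChar_conjugate_is_posChar (S : GradedStarAlgebra G A)
    (hcomm : ∀ x ∈ S.fiber 1, ∀ y ∈ S.fiber 1, x * y = y * x)
    (χ : PosChar S) (g : G) (b : A) (hb : b ∈ S.fiber g)
    (hb0 : χ.toFun (star b * b) ≠ 0) :
    (∃ θ : PosChar S, ∀ x : A,
      θ.toFun x = χ.toFun (star b * x * b) / χ.toFun (star b * b)) ∧
    (∀ b' : A, b' ∈ S.fiber g → χ.toFun (star b' * b') ≠ 0 →
      ∀ x ∈ S.fiber 1,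
        χ.toFun (star b * x * b) / χ.toFun (star b * b) =
          χ.toFun (star b' * x * b') / χ.toFun (star b' * b')) := by
  refine ⟨⟨χ.conjugate hcomm hb hb0, fun _ => rfl⟩, fun b' hb' hb'0 x hx => ?_⟩
  rw [div_eq_div_iff hb0 hb'0]
  rw [mul_comm (χ.toFun (star b' * x * b'))]
  exact χ.map_sandwich_mul_map_star_mul hcomm hx hb hb hb' hb'
end

section
/- Let G be a group and A = ⊕_{g∈G} A_g a G-graded unital *-algebra over ℂ whose unit fibre A_e is commutative. Equip the set Â_e of characters of A_e with the topology of pointwise convergence, and let Â_e⁺ ⊆ Â_e be the subset of positive characters. For g ∈ G put 𝒟_{g⁻¹} := {χ ∈ Â_e⁺ : χ(a* a) ≠ 0 for some a ∈ A_g}, and for χ ∈ 𝒟_{g⁻¹} let ϑ_g(χ) be the positive character x ↦ χ(b* x b)/χ(b* b), for any b ∈ A_g with χ(b* b) ≠ 0 (this is independent of the choice of b). Then: (i) Â_e⁺ is a closed subset of Â_e; (ii) each 𝒟_{g⁻¹} is an open subset of Â_e⁺; (iii) ϑ_g maps 𝒟_{g⁻¹} into 𝒟_g, with ϑ_e the identity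 map of Â_e⁺ and ϑ_{g⁻¹}(ϑ_g(χ)) = χ for all χ ∈ 𝒟_{g⁻¹}; (iv) ϑ_g : 𝒟_{g⁻¹} → 𝒟_g is a homeomorphism with inverse ϑ_{g⁻¹}. Thus the maps ϑ_g form a partial action of G on Â_e⁺ by partial homeomorphisms. -/
namespace GradedStarAlgebra

variable {G : Type*} [Group G]
variable {A : Type*} [Ring A] [Algebra ℂ A] [StarRing A] [StarModule ℂ A]
variable (S : GradedStarAlgebra G A)

/-- The element `a* a` of the unit fibre `A_e`, for `a ∈ A_g`. -/
def sq {g : G} {a : A} (ha : a ∈ S.fiber g) : ↥(S.fiber 1) :=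
  ⟨star a * a, by simpa using S.mul_mem' (S.star_mem' ha) ha⟩

/-- The element `b* x b` of the unit fibre `A_e`, for `b ∈ A_g` and `x ∈ A_e`. -/
def sandwich {g : G} {b : A} (hb : b ∈ S.fiber g) {x : A} (hx : x ∈ S.fiber 1) :
    ↥(S.fiber 1) :=
  ⟨star b * x * b, by simpa using S.mul_mem' (S.mul_mem' (S.star_mem' hb) hx) hb⟩

/-- A character of the unit fibre `A_e`: a unital, multiplicative, `ℂ`-linear,
`⋆`-preserving functional on `A_e`. -/
def IsCharOn (χ : ↥(S.fiber 1) → ℂ) : Prop :=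
  χ ⟨1, S.one_mem'⟩ = 1 ∧
  (∀ (x y : ↥(S.fiber 1)) (hxy : (x : A) * (y : A) ∈ S.fiber 1),
    χ ⟨(x : A) * (y : A), hxy⟩ = χ x * χ y) ∧
  (∀ (x y : ↥(S.fiber 1)) (hxy : (x : A) + (y : A) ∈ S.fiber 1),
    χ ⟨(x : A) + (y : A), hxy⟩ = χ x + χ y) ∧
  (∀ (c : ℂ) (x : ↥(S.fiber 1)) (hcx : c • (x : A) ∈ S.fiber 1),
    χ ⟨c • (x : A), hcx⟩ = c * χ x) ∧
  (∀ (x : ↥(S.fiber 1)) (hsx : star (x : A) ∈ S.fiber 1),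
    χ ⟨star (x : A), hsx⟩ = starRingEnd ℂ (χ x))

/-- A positive character of the unit fibre: `χ (a* a) ≥ 0` for all `a ∈ A_g`, `g ∈ G`. -/
def IsPosChar (χ : ↥(S.fiber 1) → ℂ) : Prop :=
  S.IsCharOn χ ∧ ∀ (g : G) (a : A) (ha : a ∈ S.fiber g),
    0 ≤ (χ (S.sq ha)).re ∧ (χ (S.sq ha)).im = 0

/-- The set `Â_e` of characters, inside the space of all functions `A_e → ℂ` with the
topology of pointwise convergence. -/
def charSet : Set (↥(S.fiber 1) → ℂ) := {χ | S.IsCharOn χ}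

/-- The set `Â_e⁺` of positive characters. -/
def posCharSet : Set (↥(S.fiber 1) → ℂ) := {χ | S.IsPosChar χ}

/-- The set `𝒟_{g⁻¹} = {χ ∈ Â_e⁺ : χ (a* a) ≠ 0 for some a ∈ A_g}`, the domain of the partial
homeomorphism `ϑ_g`. -/
def transDom (g : G) : Set (↥(S.fiber 1) → ℂ) :=
  {χ | S.IsPosChar χ ∧ ∃ (a : A) (ha : a ∈ S.fiber g), χ (S.sq ha) ≠ 0}

end GradedStarAlgebra

open GradedStarAlgebra

variable {G : Type*} [Group G]
variable {A : Type*} [Ring A] [Algebra ℂ A] [StarRing A] [StarModule ℂ A]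

open Topology
open scoped ComplexOrder

theorem star_mul_mul_mul_star_mul {R : Type*} [Semigroup R] [Star R] {b x y : R}
    (hy : y * (b * star b) = b * star b * y) :
    star b * (x * y) * b * (star b * b) = star b * x * b * (star b * y * b) :=
  calc star b * (x * y) * b * (star b * b) = star b * x * (y * (b * star b)) * b := by
        simp only [mul_assoc]
    _ = star b * x * b * (star b * y * b) := by
        rw [hy]; simp only [mul_assoc]

namespace GradedStarAlgebra

variable {S : GradedStarAlgebra G A} {χ : ↥(S.fiber 1) → ℂ}

theorem mul_mem_fiber_one {x y : A} (hx : x ∈ S.fiber 1) (hy : y ∈ S.fiber 1) :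
    x * y ∈ S.fiber 1 := by
  simpa using S.mul_mem' hx hy

namespace IsCharOn

theorem map_of_coe_eq_one (hχ : S.IsCharOn χ) {x : ↥(S.fiber 1)} (h : (x : A) = 1) :
    χ x = 1 := by
  rw [show x = ⟨1, S.one_mem'⟩ from Subtype.ext h]
  exact hχ.1

theorem map_of_coe_eq_mul (hχ : S.IsCharOn χ) {x y z : ↥(S.fiber 1)} (h : (z : A) = x * y) :
    χ z = χ x * χ y := by
  rw [show z = ⟨x * y, h ▸ z.2⟩ from Subtype.ext h]
  exact hχ.2.1 x y _

theorem map_mul_eq_map_mul (hχ : S.IsCharOn χ) {x y z w : ↥(S.fiber 1)}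
    (h : (x : A) * y = z * w) : χ x * χ y = χ z * χ w := by
  rw [← hχ.map_of_coe_eq_mul (z := ⟨_, mul_mem_fiber_one x.2 y.2⟩) rfl,
    ← hχ.map_of_coe_eq_mul (z := ⟨_, mul_mem_fiber_one x.2 y.2⟩) h]

theorem map_of_coe_eq_add (hχ : S.IsCharOn χ) {x y z : ↥(S.fiber 1)} (h : (z : A) = x + y) :
    χ z = χ x + χ y := by
  rw [show z = ⟨x + y, h ▸ z.2⟩ from Subtype.ext h]
  exact hχ.2.2.1 x y _

theorem map_of_coe_eq_smul (hχ : S.IsCharOn χ) {c : ℂ} {x z : ↥(S.fiber 1)}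
    (h : (z : A) = c • (x : A)) : χ z = c * χ x := by
  rw [show z = ⟨c • (x : A), h ▸ z.2⟩ from Subtype.ext h]
  exact hχ.2.2.2.1 c x _

theorem map_of_coe_eq_star (hχ : S.IsCharOn χ) {x z : ↥(S.fiber 1)}
    (h : (z : A) = star (x : A)) : χ z = starRingEnd ℂ (χ x) := by
  rw [show z = ⟨star (x : A), h ▸ z.2⟩ from Subtype.ext h]
  exact hχ.2.2.2.2 x _

theorem map_sq_one (hχ : S.IsCharOn χ) : χ (S.sq S.one_mem') = 1 :=
  hχ.map_of_coe_eq_one (by simp only [sq, star_one, mul_one])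

end IsCharOn

theorem isPosChar_iff :
    S.IsPosChar χ ↔ S.IsCharOn χ ∧ ∀ (g : G) (a : A) (ha : a ∈ S.fiber g), 0 ≤ χ (S.sq ha) := by
  simp only [IsPosChar, Complex.nonneg_iff, eq_comm (a := (0 : ℝ))]

theorem IsPosChar.nonneg (hχ : S.IsPosChar χ) {g : G} {a : A} (ha : a ∈ S.fiber g) :
    0 ≤ χ (S.sq ha) :=
  (isPosChar_iff.1 hχ).2 g a ha

variable (S) in
/-- `ϑ_g χ`, computed with the representative `b ∈ A_g`. -/
noncomputable def twist {g : G} {b : A} (hb : b ∈ S.fiber g) (χ : ↥(S.fiber 1) → ℂ) :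
    ↥(S.fiber 1) → ℂ :=
  fun x => χ (S.sandwich hb x.2) / χ (S.sq hb)

variable {g : G} {b : A} (hb : b ∈ S.fiber g)

theorem twist_apply (x : ↥(S.fiber 1)) :
    S.twist hb χ x = χ (S.sandwich hb x.2) / χ (S.sq hb) :=
  rfl

theorem isPosChar_twist (hcomm : ∀ x ∈ S.fiber 1, ∀ y ∈ S.fiber 1, x * y = y * x)
    (hχ : S.IsPosChar χ) (hD : χ (S.sq hb) ≠ 0) : S.IsPosChar (S.twist hb χ) := by
  have hc : b * star b ∈ S.fiber 1 := by simpa using S.mul_mem' hb (S.star_mem' hb)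
  refine isPosChar_iff.2 ⟨⟨?_, ?_, ?_, ?_, ?_⟩, ?_⟩ <;> simp only [twist_apply]
  · rw [congrArg χ (Subtype.ext (by simp only [sandwich, sq, mul_one]) :
      S.sandwich hb S.one_mem' = S.sq hb), div_self hD]
  · intro x y hxy
    have key : χ (S.sandwich hb hxy) * χ (S.sq hb)
        = χ (S.sandwich hb x.2) * χ (S.sandwich hb y.2) :=
      hχ.1.map_mul_eq_map_mul (star_mul_mul_mul_star_mul (hcomm _ y.2 _ hc))
    field_simp
    linear_combination key
  · intro x y hxy
    rw [hχ.1.map_of_coe_eq_add (x := S.sandwich hb x.2) (y := S.sandwich hb y.2)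
      (by simp only [sandwich, mul_add, add_mul]), add_div]
  · intro c x hcx
    rw [hχ.1.map_of_coe_eq_smul (c := c) (x := S.sandwich hb x.2)
      (by simp only [sandwich, mul_smul_comm, smul_mul_assoc]), mul_div_assoc]
  · intro x hsx
    rw [hχ.1.map_of_coe_eq_star (x := S.sandwich hb x.2)
      (by simp only [sandwich, star_mul, star_star, mul_assoc]), map_div₀,
      Complex.conj_eq_iff_im.2 (hχ.2 g b hb).2]
  · intro h a ha
    have hab := S.mul_mem' ha hb
    rw [congrArg χ (Subtype.ext (by simp only [sandwich, sq, star_mul, mul_assoc]) :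
      S.sandwich hb (S.sq ha).2 = S.sq hab)]
    exact div_nonneg (hχ.nonneg hab) (hχ.nonneg hb)

theorem twist_sq_star (hχ : S.IsCharOn χ) (hD : χ (S.sq hb) ≠ 0) :
    S.twist hb χ (S.sq (S.star_mem' hb)) = χ (S.sq hb) := by
  rw [twist_apply, hχ.map_of_coe_eq_mul (x := S.sq hb) (y := S.sq hb)
    (by simp only [sandwich, sq, star_star, mul_assoc]), mul_div_cancel_right₀ _ hD]

theorem twist_mem_transDom (hcomm : ∀ x ∈ S.fiber 1, ∀ y ∈ S.fiber 1, x * y = y * x)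
    (hχ : S.IsPosChar χ) (hD : χ (S.sq hb) ≠ 0) : S.twist hb χ ∈ S.transDom g⁻¹ :=
  ⟨isPosChar_twist hb hcomm hχ hD, star b, S.star_mem' hb, by rwa [twist_sq_star hb hχ.1 hD]⟩

theorem twist_star_twist (hχ : S.IsCharOn χ) (hD : χ (S.sq hb) ≠ 0) :
    S.twist (S.star_mem' hb) (S.twist hb χ) = χ := by
  funext x
  have h : χ (S.sandwich hb (S.sandwich (S.star_mem' hb) x.2).2)
      = χ (S.sq hb) * χ x * χ (S.sq hb) := by
    rw [hχ.map_of_coe_eq_mul (x := ⟨_, mul_mem_fiber_one (S.sq hb).2 x.2⟩) (y := S.sq hb)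
      (by simp only [sandwich, sq, star_star, mul_assoc]), hχ.map_of_coe_eq_mul rfl]
  rw [twist_apply, twist_sq_star hb hχ hD, twist_apply, h]
  field_simp

theorem twist_one (hχ : S.IsCharOn χ) : S.twist S.one_mem' χ = χ := by
  funext x
  rw [twist_apply, hχ.map_sq_one, div_one]
  exact congrArg χ (Subtype.ext (by simp only [sandwich, star_one, one_mul, mul_one]))

theorem continuousOn_twist : ContinuousOn (S.twist hb) {χ | χ (S.sq hb) ≠ 0} :=
  continuousOn_pi.2 fun _ =>
    (continuous_apply _).continuousOn.div (continuous_apply _).continuousOn fun _ h => h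

variable (S) in
theorem closure_posCharSet_inter_charSet_subset :
    closure S.posCharSet ∩ S.charSet ⊆ S.posCharSet := by
  have hclosed : IsClosed {χ : ↥(S.fiber 1) → ℂ |
      ∀ (g : G) (a : A) (ha : a ∈ S.fiber g), 0 ≤ χ (S.sq ha)} := by
    simp only [Set.ofPred_forall]
    exact isClosed_iInter fun g => isClosed_iInter fun a => isClosed_iInter fun ha =>
      isClosed_le continuous_const (continuous_apply _)
  rintro χ ⟨hcl, hch⟩
  exact isPosChar_iff.2
    ⟨hch, closure_minimal (fun ψ hψ => (isPosChar_iff.1 hψ).2) hclosed hcl⟩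

variable (S) in
theorem exists_isOpen_transDom_eq_inter (g : G) :
    ∃ U : Set (↥(S.fiber 1) → ℂ), IsOpen U ∧ S.transDom g = U ∩ S.posCharSet :=
  ⟨⋃ (a : A) (ha : a ∈ S.fiber g), {χ | χ (S.sq ha) ≠ 0},
    isOpen_iUnion fun _ => isOpen_iUnion fun _ =>
      isOpen_ne_fun (continuous_apply _) continuous_const,
    by ext χ; simp only [transDom, posCharSet, Set.mem_ofPred_eq, Set.mem_inter_iff,
      Set.mem_iUnion, and_comm]⟩

variable (S) in
def RealisesTwist (θ : G → (↥(S.fiber 1) → ℂ) → (↥(S.fiber 1) → ℂ)) : Prop :=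
  ∀ (g : G) (χ : ↥(S.fiber 1) → ℂ), χ ∈ S.posCharSet →
    ∀ (b : A) (hb : b ∈ S.fiber g), χ (S.sq hb) ≠ 0 → ∀ x : ↥(S.fiber 1), θ g χ x = S.twist hb χ x

namespace RealisesTwist

variable {θ : G → (↥(S.fiber 1) → ℂ) → (↥(S.fiber 1) → ℂ)}

theorem eq_twist (hθ : S.RealisesTwist θ) (hχ : S.IsPosChar χ) (hD : χ (S.sq hb) ≠ 0) :
    θ g χ = S.twist hb χ :=
  funext (hθ g χ hχ b hb hD)

theorem map_one (hθ : S.RealisesTwist θ) (hχ : S.IsPosChar χ) : θ 1 χ = χ := by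
  rw [hθ.eq_twist S.one_mem' hχ (by rw [hχ.1.map_sq_one]; exact one_ne_zero), twist_one hχ.1]

theorem mapsTo (hθ : S.RealisesTwist θ)
    (hcomm : ∀ x ∈ S.fiber 1, ∀ y ∈ S.fiber 1, x * y = y * x) (g : G) :
    Set.MapsTo (θ g) (S.transDom g) (S.transDom g⁻¹) := by
  rintro χ ⟨hχ, b, hb, hD⟩
  rw [hθ.eq_twist hb hχ hD]
  exact twist_mem_transDom hb hcomm hχ hD

theorem leftInvOn (hθ : S.RealisesTwist θ)
    (hcomm : ∀ x ∈ S.fiber 1, ∀ y ∈ S.fiber 1, x * y = y * x) (g : G) :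
    Set.LeftInvOn (θ g⁻¹) (θ g) (S.transDom g) := by
  rintro χ ⟨hχ, b, hb, hD⟩
  obtain ⟨hψ, -⟩ := twist_mem_transDom hb hcomm hχ hD
  rw [hθ.eq_twist hb hχ hD,
    hθ.eq_twist (S.star_mem' hb) hψ (by rwa [twist_sq_star hb hχ.1 hD]),
    twist_star_twist hb hχ.1 hD]

theorem bijOn (hθ : S.RealisesTwist θ)
    (hcomm : ∀ x ∈ S.fiber 1, ∀ y ∈ S.fiber 1, x * y = y * x) (g : G) :
    Set.BijOn (θ g) (S.transDom g) (S.transDom g⁻¹) :=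
  Set.InvOn.bijOn ⟨hθ.leftInvOn hcomm g, by simpa using hθ.leftInvOn hcomm g⁻¹⟩
    (hθ.mapsTo hcomm g) (by simpa using hθ.mapsTo hcomm g⁻¹)

theorem continuousOn (hθ : S.RealisesTwist θ) (g : G) :
    ContinuousOn (θ g) (S.transDom g) := by
  rintro χ ⟨hχ, b, hb, hD⟩
  have hV : {ψ : ↥(S.fiber 1) → ℂ | ψ (S.sq hb) ≠ 0} ∈ 𝓝 χ :=
    (isOpen_ne_fun (continuous_apply _) continuous_const).mem_nhds hD
  exact (continuousWithinAt_inter hV).1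
    (((continuousOn_twist hb).continuousAt hV).continuousWithinAt.congr
      (fun ψ hψ => hθ.eq_twist hb hψ.1.1 hψ.2) (hθ.eq_twist hb hχ hD))

end RealisesTwist

end GradedStarAlgebra

/-- **The partial action of `G` on the positive characters of the unit fibre.**
Let `A` be a `G`-graded unital `⋆`-algebra with commutative unit fibre `A_e`, and let
`θ g` realise the map `ϑ_g`, i.e. `θ g χ x = χ(b* x b)/χ(b* b)` whenever `b ∈ A_g` and
`χ(b* b) ≠ 0`.  Then: (i) `Â_e⁺` is closed in `Â_e`; (ii) each `𝒟_{g⁻¹}` is relatively open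
in `Â_e⁺`; (iii) `ϑ_g` maps `𝒟_{g⁻¹}` to `𝒟_g`, `ϑ_e = id`, and `ϑ_{g⁻¹} ∘ ϑ_g = id` on
`𝒟_{g⁻¹}`; (iv) `ϑ_g : 𝒟_{g⁻¹} → 𝒟_g` is a homeomorphism with inverse `ϑ_{g⁻¹}`:
its image is all of `𝒟_g` and it is continuous on `𝒟_{g⁻¹}`, as is its inverse.
Thus the maps `ϑ_g` form a partial action of `G` on `Â_e⁺` by partial homeomorphisms. -/
theorem partial_action_on_positive_characters (S : GradedStarAlgebra G A)
    (hcomm : ∀ x ∈ S.fiber 1, ∀ y ∈ S.fiber 1, x * y = y * x)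
    (θ : G → (↥(S.fiber 1) → ℂ) → (↥(S.fiber 1) → ℂ))
    (hθ : ∀ (g : G) (χ : ↥(S.fiber 1) → ℂ), χ ∈ S.posCharSet →
      ∀ (b : A) (hb : b ∈ S.fiber g), χ (S.sq hb) ≠ 0 →
        ∀ x : ↥(S.fiber 1), θ g χ x = χ (S.sandwich hb x.2) / χ (S.sq hb)) :
    -- (i) `Â_e⁺` is a closed subset of `Â_e`
    (closure (S.posCharSet) ∩ S.charSet ⊆ S.posCharSet) ∧
    -- (ii) each `𝒟_{g⁻¹}` is relatively open in `Â_e⁺`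
    (∀ g : G, ∃ U : Set (↥(S.fiber 1) → ℂ), IsOpen U ∧ S.transDom g = U ∩ S.posCharSet) ∧
    -- (iii) `ϑ_g (𝒟_{g⁻¹}) ⊆ 𝒟_g`, `ϑ_e = id`, and `ϑ_{g⁻¹} ∘ ϑ_g = id`
    (∀ g : G, ∀ χ ∈ S.transDom g, θ g χ ∈ S.transDom g⁻¹) ∧
    (∀ χ ∈ S.posCharSet, θ 1 χ = χ) ∧
    (∀ g : G, ∀ χ ∈ S.transDom g, θ g⁻¹ (θ g χ) = χ) ∧
    -- (iv) `ϑ_g : 𝒟_{g⁻¹} → 𝒟_g` is a homeomorphism with inverse `ϑ_{g⁻¹}`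
    (∀ g : G, θ g '' S.transDom g = S.transDom g⁻¹) ∧
    (∀ g : G, ContinuousOn (θ g) (S.transDom g)) := by
  have hθ' : S.RealisesTwist θ := hθ
  exact ⟨S.closure_posCharSet_inter_charSet_subset, S.exists_isOpen_transDom_eq_inter,
    hθ'.mapsTo hcomm, fun _ hχ => hθ'.map_one hχ, hθ'.leftInvOn hcomm,
    fun g => (hθ'.bijOn hcomm g).image_eq, hθ'.continuousOn⟩
end
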